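/- arXiv:2502.18870 — 2 statements merged into one kernel-verified Lean document; each statement's English description precedes it below -/
import Mathlib

section
/- For any valid Chung-Graham representation (a_i) of n with highest nonzero index 2m (so a_{2m} ∈ {1,2}), we have F_{2m+2} ≤ n < F_{2m+4}. -/
/-- The value represented by a finitely supported digit sequence:
    `∑ i, a i * F (i+2)` where `F` is the Fibonacci sequence. -/
def fibVal (a : ℕ →₀ ℕ) : ℕ := a.sum fun i c => c * Nat.fib (i + 2)

/-- Zeckendorf conditions: binary digits with no two consecutive 1's. -/
def IsZeckendorf (a : ℕ →₀ ℕ) : Prop :=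
  (∀ i, a i ≤ 1) ∧ (∀ i, a i * a (i + 1) = 0)

/-- Chung-Graham conditions: digits in {0,1,2}, zero at odd indices, and
    between any two even indices carrying digit 2 there is an even index
    carrying digit 0. -/
def IsChungGraham (a : ℕ →₀ ℕ) : Prop :=
  (∀ i, a i ≤ 2) ∧ (∀ i, Odd i → a i = 0) ∧
  (∀ i j, Even i → Even j → i < j → a i = 2 → a j = 2 →
    ∃ k, Even k ∧ i < k ∧ k < j ∧ a k = 0)

/-- The `cgsplit` rule: digit 0 ↦ (0,0), 1 ↦ (0,1), 2 ↦ (1,1). -/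
def IsSplit (a b c : ℕ →₀ ℕ) : Prop :=
  ∀ i, (a i = 0 → b i = 0 ∧ c i = 0) ∧
       (a i = 1 → b i = 0 ∧ c i = 1) ∧
       (a i = 2 → b i = 1 ∧ c i = 1)


/-!
Let `S m` be the value of the digits below index `2m`. By induction on `m`, `S m < F (2m+2)`,
and even `S m < F (2m+1)` when every digit 2 below `2m` is followed by an even-indexed 0
below `2m`. The second bound is what makes a new top digit 2 affordable:
`F (2m+1) + 2 F (2m+2) = F (2m+4)`; the Chung-Graham condition guarantees that it applies
whenever the digit at `2m` is 2.
-/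

open Finset

def fibValBelow (a : ℕ →₀ ℕ) (n : ℕ) : ℕ := ∑ i ∈ range n, a i * Nat.fib (i + 2)

def TwosClosedBelow (a : ℕ →₀ ℕ) (n : ℕ) : Prop :=
  ∀ i, Even i → i < n → a i = 2 → ∃ k, Even k ∧ i < k ∧ k < n ∧ a k = 0

lemma fibVal_eq_fibValBelow {a : ℕ →₀ ℕ} {n : ℕ} (h : ∀ i, n ≤ i → a i = 0) :
    fibVal a = fibValBelow a n := by
  refine Finsupp.sum_of_support_subset a (fun i hi => ?_) _ (fun i _ => zero_mul _)
  by_contra hin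
  exact Finsupp.mem_support_iff.mp hi (h i (by simpa using hin))

lemma mul_fib_le_fibValBelow (a : ℕ →₀ ℕ) {i n : ℕ} (hi : i < n) :
    a i * Nat.fib (i + 2) ≤ fibValBelow a n :=
  single_le_sum (f := fun i => a i * Nat.fib (i + 2)) (fun _ _ => Nat.zero_le _)
    (mem_range.mpr hi)

lemma fibValBelow_two_mul_succ {a : ℕ →₀ ℕ} (hodd : ∀ i, Odd i → a i = 0) (m : ℕ) :
    fibValBelow a (2 * (m + 1)) = fibValBelow a (2 * m) + a (2 * m) * Nat.fib (2 * m + 2) := by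
  rw [fibValBelow, fibValBelow, show 2 * (m + 1) = 2 * m + 1 + 1 by ring, sum_range_succ,
    sum_range_succ, hodd (2 * m + 1) (odd_two_mul_add_one m), zero_mul, add_zero]

namespace IsChungGraham

variable {a : ℕ →₀ ℕ}

lemma twosClosedBelow (ha : IsChungGraham a) {n : ℕ} (hn : Even n) (h2 : a n = 2) :
    TwosClosedBelow a n :=
  fun i hi hin hai => ha.2.2 i n hi hn hin hai h2

end IsChungGraham

namespace TwosClosedBelow

variable {a : ℕ →₀ ℕ} {m : ℕ}

lemma of_two_mul_succ (h : TwosClosedBelow a (2 * (m + 1))) (hm : a (2 * m) ≠ 0) :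
    TwosClosedBelow a (2 * m) := by
  intro i hi him hai
  obtain ⟨k, ⟨r, rfl⟩, hik, hkm, hk⟩ := h i hi (by omega) hai
  have hkm' : r + r ≠ 2 * m := fun he => hm (he ▸ hk)
  exact ⟨r + r, ⟨r, rfl⟩, hik, by omega, hk⟩

lemma digit_ne_two (h : TwosClosedBelow a (2 * (m + 1))) : a (2 * m) ≠ 2 := fun h2 => by
  obtain ⟨k, ⟨r, rfl⟩, hk₁, hk₂, -⟩ := h (2 * m) (even_two_mul m) (by omega) h2
  omega

end TwosClosedBelow

theorem IsChungGraham.fibValBelow_lt {a : ℕ →₀ ℕ} (ha : IsChungGraham a) (m : ℕ) :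
    fibValBelow a (2 * m) < Nat.fib (2 * m + 2) ∧
      (TwosClosedBelow a (2 * m) → fibValBelow a (2 * m) < Nat.fib (2 * m + 1)) := by
  induction m with
  | zero => simp [fibValBelow]
  | succ m ih =>
    obtain ⟨ihLt, ihClosed⟩ := ih
    have hF₃ : Nat.fib (2 * m + 3) = Nat.fib (2 * m + 1) + Nat.fib (2 * m + 2) :=
      Nat.fib_add_two
    have hF₄ : Nat.fib (2 * m + 4) = Nat.fib (2 * m + 2) + Nat.fib (2 * m + 3) :=
      Nat.fib_add_two
    have hF₂₃ : Nat.fib (2 * m + 2) ≤ Nat.fib (2 * m + 3) := Nat.fib_le_fib_succ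
    rw [fibValBelow_two_mul_succ ha.2.1, show 2 * (m + 1) + 2 = 2 * m + 4 by ring,
      show 2 * (m + 1) + 1 = 2 * m + 3 by ring]
    obtain hd | hd | hd : a (2 * m) = 0 ∨ a (2 * m) = 1 ∨ a (2 * m) = 2 := by
      have := ha.1 (2 * m); omega
    · simp only [hd, zero_mul, add_zero]
      omega
    · rw [hd, one_mul]
      refine ⟨by omega, fun hClosed => ?_⟩
      have := ihClosed (hClosed.of_two_mul_succ (by omega))
      omega
    · rw [hd]
      refine ⟨?_, fun hClosed => absurd hd hClosed.digit_ne_two⟩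
      have := ihClosed (ha.twosClosedBelow (even_two_mul m) hd)
      omega

theorem chung_graham_bounds (a : ℕ →₀ ℕ) (m : ℕ)
    (ha : IsChungGraham a) (htop : a (2 * m) ≠ 0)
    (hhigh : ∀ i, 2 * m < i → a i = 0) :
    Nat.fib (2 * m + 2) ≤ fibVal a ∧ fibVal a < Nat.fib (2 * m + 4) := by
  rw [fibVal_eq_fibValBelow (n := 2 * (m + 1)) fun i hi => hhigh i (by omega)]
  constructor
  · calc Nat.fib (2 * m + 2) ≤ a (2 * m) * Nat.fib (2 * m + 2) :=
          Nat.le_mul_of_pos_left _ (Nat.pos_of_ne_zero htop)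
      _ ≤ fibValBelow a (2 * (m + 1)) := mul_fib_le_fibValBelow a (by omega)
  · exact (ha.fibValBelow_lt (m + 1)).1
end

section
/- Any finitely supported sequence over {0,1,2} satisfying the Chung-Graham conditions with all nonzero digits at even indices ≤ 2m represents an integer strictly less than F_{2m+4}; moreover the value F_{2m+4} - 1 is achieved by a unique such sequence. -/
/-!
Peel off the top digit `c = a (2m+2)` and induct on `m`. Besides the claim
`fibVal a + 1 ≤ F (2m+4)`, with equality only for the digits `1, 1, …, 1, 2`, one carries the
sharper bound `fibVal a + 1 ≤ F (2m+3)`, with equality only for `1, 1, …, 1`, for the sequences in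
which every `2` is followed by an even-index `0` at an index `≤ 2m`: these are exactly the lower
parts admissible under a top digit `2`. The top digit contributes `c * F (2m+4)`, and the identities
`F (2m+5) = F (2m+3) + F (2m+4)`, `F (2m+6) = F (2m+3) + 2 F (2m+4)` carry both claims from `m`
to `m + 1`.
-/

open Finsupp

lemma fibVal_add (a b : ℕ →₀ ℕ) : fibVal (a + b) = fibVal a + fibVal b :=
  sum_add_index' (fun _ => zero_mul _) fun _ c d => add_mul c d _

lemma fibVal_single (n c : ℕ) : fibVal (single n c) = c * Nat.fib (n + 2) :=
  sum_single_index (zero_mul _)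

lemma eq_single_zero_of_forall_pos {a : ℕ →₀ ℕ} (h : ∀ i, 0 < i → a i = 0) :
    a = single 0 (a 0) := by
  ext (_ | i)
  · simp
  · simp [h (i + 1) i.succ_pos]

lemma erase_apply_eq_zero_of_lt {a : ℕ →₀ ℕ} {n : ℕ} (h : ∀ i, n + 2 < i → a i = 0)
    (h1 : a (n + 1) = 0) (i : ℕ) (hi : n < i) : a.erase (n + 2) i = 0 := by
  classical
  rw [erase_apply]
  split_ifs with hin
  · rfl
  · rcases (by omega : i = n + 1 ∨ n + 2 < i) with rfl | hi
    exacts [h1, h i hi]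

lemma IsChungGraham.erase {a : ℕ →₀ ℕ} (h : IsChungGraham a) (n : ℕ) :
    IsChungGraham (a.erase n) := by
  classical
  obtain ⟨hle, hodd, hgap⟩ := h
  simp only [IsChungGraham, erase_apply]
  refine ⟨fun i => ?_, fun i hi => ?_, fun i j hi hj hij h2i h2j => ?_⟩
  · split_ifs <;> simp [hle i]
  · split_ifs <;> simp [hodd i hi]
  · split_ifs at h2i h2j
    obtain ⟨k, hk, hik, hkj, hk0⟩ := hgap i j hi hj hij h2i h2j
    exact ⟨k, hk, hik, hkj, by split_ifs <;> simp [hk0]⟩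

def TwosClosedUpTo (a : ℕ →₀ ℕ) (n : ℕ) : Prop :=
  ∀ i ≤ n, a i = 2 → ∃ k, Even k ∧ i < k ∧ k ≤ n ∧ a k = 0

lemma TwosClosedUpTo.apply_ne_two {a : ℕ →₀ ℕ} {n : ℕ} (h : TwosClosedUpTo a n) : a n ≠ 2 :=
  fun h2 => by
    obtain ⟨k, -, hnk, hkn, -⟩ := h n le_rfl h2
    omega

lemma TwosClosedUpTo.erase {a : ℕ →₀ ℕ} {n : ℕ} (h : TwosClosedUpTo a (n + 2)) (hn : Even n)
    (h0 : a (n + 2) ≠ 0) : TwosClosedUpTo (a.erase (n + 2)) n := by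
  intro i hi h2
  rw [erase_ne (by omega)] at h2
  obtain ⟨k, hk, hik, hkn, hk0⟩ := h i (by omega) h2
  have hkn : k ≠ n + 2 := by rintro rfl; exact h0 hk0
  refine ⟨k, hk, hik, ?_, by rwa [erase_ne hkn]⟩
  rw [Nat.even_iff] at hk hn
  omega

lemma IsChungGraham.twosClosedUpTo_erase {a : ℕ →₀ ℕ} {n : ℕ} (h : IsChungGraham a)
    (hn : Even n) (h2 : a (n + 2) = 2) : TwosClosedUpTo (a.erase (n + 2)) n := by
  intro i hi h2i
  rw [erase_ne (by omega)] at h2i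
  have hi : Even i := by
    by_contra hodd
    rw [h.2.1 i (Nat.not_even_iff_odd.mp hodd)] at h2i
    omega
  obtain ⟨k, hk, hik, hkn, hk0⟩ := h.2.2 i (n + 2) hi (hn.add even_two) (by omega) h2i h2
  refine ⟨k, hk, hik, ?_, by rwa [erase_ne (by omega)]⟩
  rw [Nat.even_iff] at hk hn
  omega

noncomputable def evenOnes (m : ℕ) : ℕ →₀ ℕ :=
  ∑ k ∈ Finset.range (m + 1), single (2 * k) 1

noncomputable def cgMax (m : ℕ) : ℕ →₀ ℕ :=
  evenOnes m + single (2 * m) 1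

lemma evenOnes_zero : evenOnes 0 = single 0 1 := by
  simp [evenOnes]

lemma evenOnes_succ (m : ℕ) : evenOnes (m + 1) = evenOnes m + single (2 * m + 2) 1 := by
  rw [evenOnes, Finset.sum_range_succ, ← evenOnes]
  rfl

lemma cgMax_zero : cgMax 0 = single 0 2 := by
  rw [cgMax, evenOnes_zero, ← single_add]

lemma cgMax_succ (m : ℕ) : cgMax (m + 1) = evenOnes m + single (2 * m + 2) 2 := by
  rw [cgMax, evenOnes_succ, add_assoc, show 2 * (m + 1) = 2 * m + 2 by ring, ← single_add]

lemma evenOnes_apply (m i : ℕ) : evenOnes m i = if Even i ∧ i ≤ 2 * m then 1 else 0 := by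
  induction m with
  | zero =>
    rw [evenOnes_zero, single_apply]
    split_ifs <;> simp only [Nat.even_iff] at * <;> omega
  | succ m ih =>
    rw [evenOnes_succ, Finsupp.add_apply, ih, single_apply]
    split_ifs <;> simp only [Nat.even_iff] at * <;> omega

lemma cgMax_apply (m i : ℕ) :
    cgMax m i = (if Even i ∧ i ≤ 2 * m then 1 else 0) + if 2 * m = i then 1 else 0 := by
  rw [cgMax, Finsupp.add_apply, evenOnes_apply, single_apply]

lemma cgMax_apply_eq_zero_of_lt (m i : ℕ) (hi : 2 * m < i) : cgMax m i = 0 := by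
  rw [cgMax_apply]
  split_ifs <;> omega

lemma isChungGraham_cgMax (m : ℕ) : IsChungGraham (cgMax m) := by
  simp only [IsChungGraham, cgMax_apply, Nat.even_iff]
  refine ⟨fun i => ?_, fun i hi => ?_, fun i j _ _ hij h2i h2j => ?_⟩
  · split_ifs <;> omega
  · rw [Nat.odd_iff] at hi
    split_ifs <;> omega
  · split_ifs at h2i h2j <;> omega

lemma fibVal_evenOnes (m : ℕ) : fibVal (evenOnes m) + 1 = Nat.fib (2 * m + 3) := by
  induction m with
  | zero => rw [evenOnes_zero, fibVal_single]; rfl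
  | succ m ih =>
    have h : Nat.fib (2 * (m + 1) + 3) = Nat.fib (2 * m + 3) + Nat.fib (2 * m + 2 + 2) :=
      Nat.fib_add_two
    rw [evenOnes_succ, fibVal_add, fibVal_single]
    omega

lemma fibVal_cgMax (m : ℕ) : fibVal (cgMax m) + 1 = Nat.fib (2 * m + 4) := by
  have h := fibVal_evenOnes m
  have h4 : Nat.fib (2 * m + 4) = Nat.fib (2 * m + 2) + Nat.fib (2 * m + 3) := Nat.fib_add_two
  rw [cgMax, fibVal_add, fibVal_single]
  omega

lemma lt_or_eq_cgMax_succ {m c : ℕ} {b : ℕ →₀ ℕ} (hc : c ≤ 2)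
    (hb : fibVal b + 1 < Nat.fib (2 * m + 4) ∨ b = cgMax m)
    (hb2 : c = 2 → fibVal b + 1 < Nat.fib (2 * m + 3) ∨ b = evenOnes m) :
    fibVal (b + single (2 * m + 2) c) + 1 < Nat.fib (2 * (m + 1) + 4) ∨
      b + single (2 * m + 2) c = cgMax (m + 1) := by
  have hb : fibVal b + 1 ≤ Nat.fib (2 * m + 4) := by
    rcases hb with hb | rfl
    exacts [hb.le, (fibVal_cgMax m).le]
  have h5 : Nat.fib (2 * m + 5) = Nat.fib (2 * m + 3) + Nat.fib (2 * m + 4) := Nat.fib_add_two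
  have h6 : Nat.fib (2 * (m + 1) + 4) = Nat.fib (2 * m + 4) + Nat.fib (2 * m + 5) := Nat.fib_add_two
  have h4 : Nat.fib (2 * m + 2 + 2) = Nat.fib (2 * m + 4) := rfl
  have h45 : Nat.fib (2 * m + 4) < Nat.fib (2 * m + 5) := Nat.fib_lt_fib_succ (by omega)
  rw [fibVal_add, fibVal_single]
  rcases (by omega : c = 0 ∨ c = 1 ∨ c = 2) with rfl | rfl | rfl
  · left
    omega
  · left
    omega
  · rcases hb2 rfl with hb2 | rfl
    · left
      omega
    · exact .inr (cgMax_succ m).symm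

lemma lt_or_eq_evenOnes_succ {m c : ℕ} {b : ℕ →₀ ℕ} (hc : c ≤ 1)
    (hb : fibVal b + 1 < Nat.fib (2 * m + 4) ∨ b = cgMax m)
    (hb1 : c = 1 → fibVal b + 1 < Nat.fib (2 * m + 3) ∨ b = evenOnes m) :
    fibVal (b + single (2 * m + 2) c) + 1 < Nat.fib (2 * (m + 1) + 3) ∨
      b + single (2 * m + 2) c = evenOnes (m + 1) := by
  have hb : fibVal b + 1 ≤ Nat.fib (2 * m + 4) := by
    rcases hb with hb | rfl
    exacts [hb.le, (fibVal_cgMax m).le]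
  have h5 : Nat.fib (2 * (m + 1) + 3) = Nat.fib (2 * m + 3) + Nat.fib (2 * m + 4) :=
    Nat.fib_add_two
  have h4 : Nat.fib (2 * m + 2 + 2) = Nat.fib (2 * m + 4) := rfl
  have h3 : 0 < Nat.fib (2 * m + 3) := Nat.fib_pos.mpr (by omega)
  rw [fibVal_add, fibVal_single]
  rcases (by omega : c = 0 ∨ c = 1) with rfl | rfl
  · left
    omega
  · rcases hb1 rfl with hb1 | rfl
    · left
      omega
    · exact .inr (evenOnes_succ m).symm

theorem lt_or_eq_cgMax_and_lt_or_eq_evenOnes (m : ℕ) :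
    (∀ a : ℕ →₀ ℕ, IsChungGraham a → (∀ i, 2 * m < i → a i = 0) →
      fibVal a + 1 < Nat.fib (2 * m + 4) ∨ a = cgMax m) ∧
    (∀ a : ℕ →₀ ℕ, IsChungGraham a → (∀ i, 2 * m < i → a i = 0) → TwosClosedUpTo a (2 * m) →
      fibVal a + 1 < Nat.fib (2 * m + 3) ∨ a = evenOnes m) := by
  induction m with
  | zero =>
    refine ⟨fun a ha hsupp => ?_, fun a ha hsupp hclosed => ?_⟩
    all_goals
      have h0 : a 0 ≤ 2 := ha.1 0
      have hF : Nat.fib (0 + 2) = 1 ∧ Nat.fib (2 * 0 + 3) = 2 ∧ Nat.fib (2 * 0 + 4) = 3 :=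
        ⟨rfl, rfl, rfl⟩
      rw [eq_single_zero_of_forall_pos hsupp, fibVal_single, hF.1, mul_one]
    · rcases (by omega : a 0 ≤ 1 ∨ a 0 = 2) with h | h
      · exact .inl (by omega)
      · exact .inr (by rw [h, cgMax_zero])
    · have h2 : a 0 ≠ 2 := hclosed.apply_ne_two
      rcases (by omega : a 0 = 0 ∨ a 0 = 1) with h | h
      · exact .inl (by omega)
      · exact .inr (by rw [h, evenOnes_zero])
  | succ m ih =>
    obtain ⟨ihMax, ihOnes⟩ := ih
    have hm : Even (2 * m) := even_two_mul m
    refine ⟨fun a ha hsupp => ?_, fun a ha hsupp hclosed => ?_⟩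
    all_goals
      have hbCG := ha.erase (2 * m + 2)
      have hbsupp := erase_apply_eq_zero_of_lt (fun i hi => hsupp i (by omega))
        (ha.2.1 _ (odd_two_mul_add_one m))
      rw [← erase_add_single (2 * m + 2) a]
    · exact lt_or_eq_cgMax_succ (ha.1 _) (ihMax _ hbCG hbsupp)
        fun h2 => ihOnes _ hbCG hbsupp (ha.twosClosedUpTo_erase hm h2)
    · have h2 : a (2 * m + 2) ≠ 2 := hclosed.apply_ne_two
      exact lt_or_eq_evenOnes_succ (by have := ha.1 (2 * m + 2); omega) (ihMax _ hbCG hbsupp)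
        fun h1 => ihOnes _ hbCG hbsupp (hclosed.erase (n := 2 * m) hm (by omega))

theorem chung_graham_bounded_max (m : ℕ) :
    (∀ a : ℕ →₀ ℕ, IsChungGraham a → (∀ i, 2 * m < i → a i = 0) →
      fibVal a < Nat.fib (2 * m + 4)) ∧
    (∃! a : ℕ →₀ ℕ, IsChungGraham a ∧ (∀ i, 2 * m < i → a i = 0) ∧
      fibVal a = Nat.fib (2 * m + 4) - 1) := by
  have hmax := fibVal_cgMax m
  have key := (lt_or_eq_cgMax_and_lt_or_eq_evenOnes m).1
  refine ⟨fun a ha hsupp => ?_, ⟨cgMax m, ⟨isChungGraham_cgMax m, cgMax_apply_eq_zero_of_lt m,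
    by omega⟩, fun a ⟨ha, hsupp, hval⟩ => (key a ha hsupp).resolve_left (by omega)⟩⟩
  rcases key a ha hsupp with h | rfl <;> omega
end
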